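/- arXiv:1510.05246 — 4 statements merged into one kernel-verified Lean document; each statement's English description precedes it below -/
import Mathlib

section
/- Let G be a finite connected simple graph and let k ≥ 3 be the smallest integer such that G has a spanning tree with exactly k leaves. If T is any spanning tree of G with k leaves, then no two leaves of T are adjacent in G (i.e., the set of leaves of T is an independent set in G). -/
/-!
Suppose two leaves `u`, `v` of `T` are adjacent in `G`. Since `T` has at least three leaves it is
not a path, so the `u`–`v` path of `T` has an inner vertex `w` of degree at least three. Adding the
edge `uv` to `T` and deleting the edge `wx` of the path leaving `w` towards `v` gives another
spanning tree of `G`. Apart from `x`, its leaves are leaves of `T` other than `u` and `v`: those two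
gained a neighbour, `w` keeps at least two, and all other vertices keep their neighbourhoods. So it
has at most `k - 1` leaves, contradicting the minimality of `k`.
-/

open Set

namespace SimpleGraph

variable {V : Type*} {G : SimpleGraph V} {a b u v w x : V}

def leafSet (G : SimpleGraph V) : Set V := {v | (G.neighborSet v).ncard = 1}

lemma mem_leafSet : v ∈ G.leafSet ↔ (G.neighborSet v).ncard = 1 := Iff.rfl

lemma neighborSet_sup_edge_of_ne (hu : a ≠ u) (hv : a ≠ v) :
    (G ⊔ edge u v).neighborSet a = G.neighborSet a := by
  ext b
  simp [edge_adj, hu, hv]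

lemma neighborSet_sup_edge_left (huv : u ≠ v) :
    (G ⊔ edge u v).neighborSet u = insert v (G.neighborSet u) := by
  ext b
  grind [mem_neighborSet, neighborSet_sup]

lemma neighborSet_deleteEdges_of_ne (hw : a ≠ w) (hx : a ≠ x) :
    (G.deleteEdges {s(w, x)}).neighborSet a = G.neighborSet a := by
  ext b
  simp [hw, hx]

lemma neighborSet_deleteEdges_left :
    (G.deleteEdges {s(w, x)}).neighborSet w = G.neighborSet w \ {x} := by
  ext b
  grind [mem_neighborSet, deleteEdges_adj, Sym2.eq_iff, G.ne_of_adj]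

lemma notMem_leafSet_sup_edge_left [Finite V] (hu : u ∈ G.leafSet) (huv : u ≠ v)
    (hnadj : ¬G.Adj u v) : u ∉ (G ⊔ edge u v).leafSet := by
  rw [mem_leafSet] at hu ⊢
  rw [neighborSet_sup_edge_left huv,
    ncard_insert_of_notMem (show v ∉ G.neighborSet u from hnadj), hu]
  decide

lemma leafSet_sup_edge_subset [Finite V] (hu : u ∈ G.leafSet) (hv : v ∈ G.leafSet)
    (huv : u ≠ v) (hnadj : ¬G.Adj u v) : (G ⊔ edge u v).leafSet ⊆ G.leafSet \ {u, v} := by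
  intro a ha
  obtain rfl | hau := eq_or_ne a u
  · exact absurd ha (notMem_leafSet_sup_edge_left hu huv hnadj)
  obtain rfl | hav := eq_or_ne a v
  · rw [edge_comm] at ha
    exact absurd ha (notMem_leafSet_sup_edge_left hv huv.symm (fun h => hnadj h.symm))
  refine ⟨?_, by simp [hau, hav]⟩
  rwa [mem_leafSet, ← neighborSet_sup_edge_of_ne hau hav]

lemma leafSet_deleteEdges_subset [Finite V] (hw : 3 ≤ (G.neighborSet w).ncard) :
    (G.deleteEdges {s(w, x)}).leafSet ⊆ insert x G.leafSet := by
  intro a ha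
  obtain rfl | hax := eq_or_ne a x
  · exact mem_insert a _
  obtain rfl | haw := eq_or_ne a w
  · have := pred_ncard_le_ncard_sdiff_singleton (G.neighborSet a) x
    rw [mem_leafSet, neighborSet_deleteEdges_left] at ha
    omega
  rw [mem_leafSet, neighborSet_deleteEdges_of_ne haw hax] at ha
  exact mem_insert_of_mem x ha

lemma Walk.IsPath.exists_adj_adj_ne_of_mem_support {p : G.Walk u v} (hp : p.IsPath)
    (ha : a ∈ p.support) (hau : a ≠ u) (hav : a ≠ v) :
    ∃ b ∈ p.support, ∃ c ∈ p.support, b ≠ c ∧ G.Adj a b ∧ G.Adj a c := by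
  obtain ⟨i, rfl, hi⟩ := Walk.mem_support_iff_exists_getVert.1 ha
  have hi0 : i ≠ 0 := by rintro rfl; simp at hau
  have hil : i ≠ p.length := by rintro rfl; simp at hav
  refine ⟨p.getVert (i - 1), p.getVert_mem_support _, p.getVert (i + 1), p.getVert_mem_support _,
    fun h => ?_, ?_, p.adj_getVert_succ (by omega)⟩
  · have := hp.getVert_injOn (by simp only [mem_ofPred_eq]; omega)
      (by simp only [mem_ofPred_eq]; omega) h
    omega
  · simpa [Nat.sub_add_cancel (Nat.one_le_iff_ne_zero.2 hi0)] using
      (p.adj_getVert_succ (i := i - 1) (by omega)).symm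

lemma Walk.IsPath.two_le_ncard_neighborSet_of_mem_support [Finite V] {p : G.Walk u v}
    (hp : p.IsPath) (ha : a ∈ p.support) (hau : a ≠ u) (hav : a ≠ v) :
    2 ≤ (G.neighborSet a).ncard := by
  obtain ⟨b, -, c, -, hbc, hb, hc⟩ := hp.exists_adj_adj_ne_of_mem_support ha hau hav
  rw [← ncard_pair hbc]
  exact ncard_le_ncard (pair_subset hb hc)

lemma Walk.mem_support_of_adj_of_mem_leafSet [Finite V] (hu : u ∈ G.leafSet) (huv : u ≠ v)
    (p : G.Walk u v) (hb : G.Adj u b) : b ∈ p.support := by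
  have hnil : ¬p.Nil := Walk.not_nil_of_ne huv
  rw [(ncard_le_one (toFinite _)).1 (mem_leafSet.1 hu).le b hb p.snd (p.adj_snd hnil)]
  exact p.getVert_mem_support 1

lemma Preconnected.exists_mem_support_three_le_ncard_neighborSet [Finite V]
    (hG : G.Preconnected) (hL : 3 ≤ G.leafSet.ncard) (hu : u ∈ G.leafSet) (hv : v ∈ G.leafSet)
    (huv : u ≠ v) {p : G.Walk u v} (hp : p.IsPath) :
    ∃ w ∈ p.support, w ≠ u ∧ w ≠ v ∧ 3 ≤ (G.neighborSet w).ncard := by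
  by_contra! hdeg
  -- Otherwise every vertex of the path has all its neighbours on the path.
  have hclosed : ∀ a b, G.Adj a b → a ∈ p.support → b ∈ p.support := by
    intro a b hab ha
    obtain rfl | hau := eq_or_ne a u
    · exact p.mem_support_of_adj_of_mem_leafSet hu huv hab
    obtain rfl | hav := eq_or_ne a v
    · simpa using p.reverse.mem_support_of_adj_of_mem_leafSet hv huv.symm hab
    obtain ⟨b', hb', c', hc', hbc, hab', hac'⟩ := hp.exists_adj_adj_ne_of_mem_support ha hau hav
    have hpair : G.neighborSet a = {b', c'} :=
      (eq_of_subset_of_ncard_le (pair_subset (s := G.neighborSet a) hab' hac')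
        (by rw [ncard_pair hbc]; linarith [hdeg a ha hau hav])).symm
    have hb : b ∈ ({b', c'} : Set V) := hpair ▸ hab
    rcases hb with rfl | rfl <;> assumption
  have hall : ∀ z, z ∈ p.support := fun z => by
    by_contra hz
    obtain ⟨q⟩ := hG u z
    obtain ⟨d, -, hd, hd'⟩ := q.exists_boundary_dart {z | z ∈ p.support} p.start_mem_support hz
    exact hd' (hclosed _ _ d.adj hd)
  have hleaves : G.leafSet ⊆ {u, v} := by
    intro z hz
    by_contra hzuv
    simp only [mem_insert_iff, mem_singleton_iff, not_or] at hzuv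
    have := hp.two_le_ncard_neighborSet_of_mem_support (hall z) hzuv.1 hzuv.2
    rw [mem_leafSet.1 hz] at this
    omega
  have := ncard_le_ncard hleaves
  rw [ncard_pair huv] at this
  omega

/-- `uv` closes a cycle with `p`, so `wx` is no bridge of `G ⊔ edge u v`; deleting it keeps the
graph connected with as many edges as `G`. -/
lemma IsTree.isTree_sup_edge_deleteEdges [Finite V] (hG : G.IsTree) (huv : u ≠ v)
    (hnadj : ¬G.Adj u v) {p : G.Walk u v} (hp : p.IsPath) (hwx : s(w, x) ∈ p.edges) :
    ((G ⊔ edge u v).deleteEdges {s(w, x)}).IsTree := by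
  have hvu : (G ⊔ edge u v).Adj v u := Or.inr ((edge_adj ..).2 ⟨Or.inr ⟨rfl, rfl⟩, huv.symm⟩)
  have hcycle : (Walk.cons hvu (p.mapLe le_sup_left)).IsCycle := by
    rw [Walk.cons_isCycle_iff, Walk.edges_mapLe_eq_edges]
    exact ⟨hp.mapLe _, fun h => hnadj (p.adj_of_mem_edges (Sym2.eq_swap ▸ h))⟩
  have hbridge : ¬(G ⊔ edge u v).IsBridge s(w, x) := fun hb =>
    hb.notMem_edges_of_isCycle hcycle (by simp [hwx])
  have hcard := (isTree_iff_connected_and_card.1 hG).2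
  rw [isTree_iff_connected_and_card]
  refine ⟨(hG.connected.mono le_sup_left).connected_delete_edge_of_not_isBridge hbridge, ?_⟩
  have hwxG : s(w, x) ∈ G.edgeSet := p.edges_subset_edgeSet hwx
  rw [edgeSet_deleteEdges, edgeSet_sup, edgeSet_edge_of_ne huv, union_singleton,
    Nat.card_coe_set_eq, ncard_sdiff_singleton_add_one (mem_insert_of_mem _ hwxG),
    ncard_insert_of_notMem (show s(u, v) ∉ G.edgeSet from hnadj), ← hcard, Nat.card_coe_set_eq]

end SimpleGraph

open SimpleGraph Set

theorem stmt_1_general {V : Type*} [Fintype V] (G : SimpleGraph V) (k : ℕ)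
    (hk3 : 3 ≤ k)
    (hmin : ∀ j : ℕ, (∃ T : SimpleGraph V, T ≤ G ∧ T.IsTree ∧
      {v : V | (T.neighborSet v).ncard = 1}.ncard = j) → k ≤ j)
    (T : SimpleGraph V) (hTG : T ≤ G) (hTtree : T.IsTree)
    (hTk : {v : V | (T.neighborSet v).ncard = 1}.ncard = k) :
    ∀ u v : V, u ≠ v → (T.neighborSet u).ncard = 1 → (T.neighborSet v).ncard = 1 →
      ¬ G.Adj u v := by
  classical
  intro u v huv hu hv hGuv
  change T.leafSet.ncard = k at hTk
  have hbranch {p : T.Walk u v} (hp : p.IsPath) :=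
    hTtree.connected.preconnected.exists_mem_support_three_le_ncard_neighborSet (hTk ▸ hk3)
      hu hv huv hp
  have hTuv : ¬T.Adj u v := fun h => by
    obtain ⟨w, hw, hwu, hwv, -⟩ := hbranch (p := .cons h .nil) (by simp [huv])
    simp_all
  obtain ⟨p, hp⟩ := hTtree.connected.exists_isPath u v
  obtain ⟨w, hw, hwu, hwv, hw3⟩ := hbranch hp
  set x := (p.dropUntil w hw).snd
  have hwx : s(w, x) ∈ p.edges := p.edges_dropUntil_subset_edges hw
    ((p.dropUntil w hw).mk_start_snd_mem_edges (Walk.not_nil_of_ne hwv))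
  set T' := (T ⊔ edge u v).deleteEdges {s(w, x)}
  have hT'G : T' ≤ G := (deleteEdges_le _).trans (sup_le hTG ((edge_le_iff G).2 (Or.inr hGuv)))
  have hleaves : T'.leafSet ⊆ insert x (T.leafSet \ {u, v}) :=
    (leafSet_deleteEdges_subset (by rwa [neighborSet_sup_edge_of_ne hwu hwv])).trans
      (insert_subset_insert (leafSet_sup_edge_subset hu hv huv hTuv))
  have hk : k ≤ T'.leafSet.ncard :=
    hmin _ ⟨T', hT'G, hTtree.isTree_sup_edge_deleteEdges huv hTuv hp hwx, rfl⟩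
  have : T'.leafSet.ncard ≤ k - 2 + 1 := calc
    _ ≤ _ := ncard_le_ncard hleaves
    _ ≤ (T.leafSet \ {u, v}).ncard + 1 := ncard_insert_le _ _
    _ = k - 2 + 1 := by rw [ncard_sdiff (pair_subset (s := T.leafSet) hu hv), ncard_pair huv, hTk]
  omega

/-- Let `G` be a finite connected simple graph and let `k ≥ 3` be the smallest integer such
that `G` has a spanning tree with exactly `k` leaves. If `T` is any spanning tree of `G` with
`k` leaves, then no two leaves of `T` are adjacent in `G`. -/
theorem stmt_1 {V : Type*} [Fintype V] (G : SimpleGraph V) (hG : G.Connected) (k : ℕ)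
    (hk3 : 3 ≤ k)
    (hex : ∃ T : SimpleGraph V, T ≤ G ∧ T.IsTree ∧
      {v : V | (T.neighborSet v).ncard = 1}.ncard = k)
    (hmin : ∀ j : ℕ, (∃ T : SimpleGraph V, T ≤ G ∧ T.IsTree ∧
      {v : V | (T.neighborSet v).ncard = 1}.ncard = j) → k ≤ j)
    (T : SimpleGraph V) (hTG : T ≤ G) (hTtree : T.IsTree)
    (hTk : {v : V | (T.neighborSet v).ncard = 1}.ncard = k) :
    ∀ u v : V, u ≠ v → (T.neighborSet u).ncard = 1 → (T.neighborSet v).ncard = 1 →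
      ¬ G.Adj u v :=
  stmt_1_general G k hk3 hmin T hTG hTtree hTk
end

section
/- (Ore) Let G be a finite connected simple graph on n vertices. If for every pair of distinct nonadjacent vertices u, v of G one has deg(u) + deg(v) ≥ n − 1, then G has a Hamiltonian path. -/
/-!
Take a longest path `p` from `u` to `v`; by maximality all neighbours of `u` and `v` lie on `p`.
If `u` and `v` are nonadjacent, Ore's condition and pigeonhole give an index `i` with
`u ~ p (i + 1)` and `v ~ p i`, and then `u → ⋯ → p i → v → ⋯ → p (i + 1) → u` is a cycle on the
vertices of `p`. If `p` missed a vertex, connectivity would give an edge `x y` with `x` on the cycle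
and `y` off it, and opening the cycle at `x` and appending `y` would give a longer path.
-/

open Finset

namespace SimpleGraph.Walk

variable {V : Type*} {G : SimpleGraph V}

lemma IsPath.mem_support_of_adj_start {u v z : V} {p : G.Walk u v} (hp : p.IsPath)
    (hmax : ∀ (a b : V) (q : G.Walk a b), q.IsPath → q.length ≤ p.length) (h : G.Adj u z) :
    z ∈ p.support := by
  by_contra hz
  simpa using hmax _ _ _ (hp.cons hz (h := h.symm))

lemma IsPath.mem_support_of_adj_end {u v z : V} {p : G.Walk u v} (hp : p.IsPath)
    (hmax : ∀ (a b : V) (q : G.Walk a b), q.IsPath → q.length ≤ p.length) (h : G.Adj v z) :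
    z ∈ p.support := by
  simpa using hp.reverse.mem_support_of_adj_start (by simpa using hmax) h

/- A closed walk `c` with `c.support.tail ~ p.support` is a cycle through exactly the vertices
of the path `p` (or a back-and-forth walk along a single edge). -/
lemma exists_support_tail_perm_of_adj {u v : V} (p : G.Walk u v) (h : G.Adj v u) :
    ∃ c : G.Walk u u, c.support.tail.Perm p.support := by
  refine ⟨p.concat h, ?_⟩
  rw [support_concat, ← p.cons_tail_support, List.cons_append, List.tail_cons]
  exact List.perm_append_singleton _ _

lemma exists_support_tail_perm_of_crossing {u v : V} (p : G.Walk u v) {i : ℕ}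
    (hi : i < p.length) (hu : G.Adj u (p.getVert (i + 1))) (hv : G.Adj v (p.getVert i)) :
    ∃ c : G.Walk u u, c.support.tail.Perm p.support := by
  -- `u → ⋯ → p i → v → ⋯ → p (i + 1) → u`
  refine ⟨(p.take i).append (cons hv.symm ((p.drop (i + 1)).reverse.concat hu.symm)), ?_⟩
  rw [support_append, support_take, support_cons, List.tail_cons, support_concat,
    support_reverse, drop_support_eq_support_drop_min, min_eq_left hi, ← p.cons_tail_support]
  simp only [List.take_succ_cons, List.drop_succ_cons, List.cons_append, List.tail_cons]
  set T := p.support.tail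
  have hsplit : (T.take i ++ (T.drop i).reverse).Perm T := by
    conv_rhs => rw [← List.take_append_drop i T]
    exact (List.reverse_perm _).append_left _
  rw [← List.append_assoc]
  exact (List.perm_append_singleton _ _).trans (hsplit.cons u)

lemma IsPath.exists_isPath_length_succ [DecidableEq V] {u v w x y : V} {p : G.Walk u v}
    (hp : p.IsPath) {c : G.Walk w w} (hc : c.support.tail.Perm p.support)
    (hx : x ∈ p.support) (hy : y ∉ p.support) (hxy : G.Adj x y) :
    ∃ (a : V) (q : G.Walk a y), q.IsPath ∧ q.length = p.length + 1 := by
  have hlen : c.length = p.length + 1 := by simpa using hc.length_eq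
  have hxc : x ∈ c.support := List.mem_of_mem_tail (hc.mem_iff.2 hx)
  set c' := c.rotate x hxc
  have hc' : ¬c'.Nil := by
    rw [nil_rotate, ← length_eq_zero_iff, hlen]; omega
  have htail : c'.tail.support.Perm p.support := by
    rw [support_tail_of_not_nil _ hc']
    exact (support_rotate c x hxc).perm.trans hc
  refine ⟨_, c'.tail.concat hxy, ?_, ?_⟩
  · exact (IsPath.mk' (htail.nodup_iff.2 hp.support_nodup)).concat (htail.mem_iff.not.2 hy) hxy
  · rw [length_concat, length_tail_add_one hc', length_rotate, hlen]

variable [Fintype V] [DecidableRel G.Adj]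

lemma IsPath.card_filter_adj_getVert {u v w : V} {p : G.Walk u v} (hp : p.IsPath)
    (hw : ∀ z, G.Adj w z → z ∈ p.support) :
    #{i ∈ range (p.length + 1) | G.Adj w (p.getVert i)} = G.degree w := by
  rw [← card_neighborFinset_eq_degree]
  refine card_bij (fun i _ ↦ p.getVert i) (fun i hi ↦ by simpa using (mem_filter.1 hi).2) ?_ ?_
  · intro i hi j hj hij
    simp only [mem_filter, mem_range] at hi hj
    exact hp.getVert_injOn (by simpa [Nat.lt_succ_iff] using hi.1)
      (by simpa [Nat.lt_succ_iff] using hj.1) hij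
  · intro z hz
    obtain ⟨i, rfl, hi⟩ := mem_support_iff_exists_getVert.1 (hw z (by simpa using hz))
    exact ⟨i, by simpa [Nat.lt_succ_iff, hi] using hz, rfl⟩

lemma IsPath.exists_crossing {u v : V} {p : G.Walk u v} (hp : p.IsPath)
    (hu : ∀ z, G.Adj u z → z ∈ p.support) (hv : ∀ z, G.Adj v z → z ∈ p.support)
    (hdeg : p.length < G.degree u + G.degree v) :
    ∃ i < p.length, G.Adj u (p.getVert (i + 1)) ∧ G.Adj v (p.getVert i) := by
  have hU : #{i ∈ range p.length | G.Adj u (p.getVert (i + 1))} = G.degree u := by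
    have := hp.card_filter_adj_getVert hu
    rwa [card_filter, sum_range_succ', getVert_zero, if_neg (G.irrefl), add_zero,
      ← card_filter] at this
  have hV : #{i ∈ range p.length | G.Adj v (p.getVert i)} = G.degree v := by
    have := hp.card_filter_adj_getVert hv
    rwa [card_filter, sum_range_succ, getVert_length, if_neg (G.irrefl), add_zero,
      ← card_filter] at this
  obtain ⟨i, hi⟩ := inter_nonempty_of_card_lt_card_add_card (filter_subset _ (range p.length))
    (filter_subset (fun i ↦ G.Adj v (p.getVert i)) _) (by rwa [card_range, hU, hV])
  simp only [mem_inter, mem_filter, mem_range] at hi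
  exact ⟨i, hi.1.1, hi.1.2, hi.2.2⟩

lemma IsPath.exists_support_tail_perm {u v : V} {p : G.Walk u v} (hp : p.IsPath)
    (hu : ∀ z, G.Adj u z → z ∈ p.support) (hv : ∀ z, G.Adj v z → z ∈ p.support)
    (hore : G.Adj v u ∨ p.length < G.degree u + G.degree v) :
    ∃ c : G.Walk u u, c.support.tail.Perm p.support := by
  obtain hvu | hdeg := hore
  · exact p.exists_support_tail_perm_of_adj hvu
  · obtain ⟨i, hi, hui, hvi⟩ := hp.exists_crossing hu hv hdeg
    exact p.exists_support_tail_perm_of_crossing hi hui hvi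

end SimpleGraph.Walk

open SimpleGraph Walk

/-- (Ore) Let `G` be a finite connected simple graph on `n` vertices. If every pair of
distinct nonadjacent vertices `u, v` satisfies `deg u + deg v ≥ n - 1`, then `G` has a
Hamiltonian path. -/
theorem stmt_3 {V : Type*} [Fintype V] [DecidableEq V] (G : SimpleGraph V) [DecidableRel G.Adj]
    (hG : G.Connected)
    (hdeg : ∀ u v : V, u ≠ v → ¬ G.Adj u v →
      Fintype.card V - 1 ≤ G.degree u + G.degree v) :
    ∃ (u v : V) (p : G.Walk u v), p.IsHamiltonian := by
  have := hG.nonempty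
  obtain ⟨u, v, p, hp, hmax⟩ := exists_isPath_forall_isPath_length_le_length G
  refine ⟨u, v, p, hp.isHamiltonian_of_mem fun w ↦ ?_⟩
  by_contra hw
  obtain ⟨⟨⟨x, y⟩, hxy⟩, -, hx, hy⟩ :=
    (hG.preconnected u w).some.exists_boundary_dart {z | z ∈ p.support} p.start_mem_support hw
  have hu : ∀ z, G.Adj u z → z ∈ p.support := fun _ ↦ hp.mem_support_of_adj_start hmax
  have hv : ∀ z, G.Adj v z → z ∈ p.support := fun _ ↦ hp.mem_support_of_adj_end hmax
  have hcard : p.length + 1 < Fintype.card V := by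
    simpa using (hp.support_nodup.cons hy).length_le_card
  have hne : u ≠ v := by
    rintro rfl
    have hxu : x = u := by simpa [nil_iff_support_eq.1 (isPath_iff_nil.1 hp)] using hx
    exact hy (hu y (hxu ▸ hxy))
  obtain ⟨c, hc⟩ := hp.exists_support_tail_perm hu hv <| or_iff_not_imp_left.2 fun hvu ↦ by
    have := hdeg u v hne (fun h ↦ hvu h.symm)
    omega
  obtain ⟨a, q, hq, hlen⟩ := hp.exists_isPath_length_succ hc hx hy hxy
  have := hmax a y q hq
  omega
end

section
/- (Bondy–Chvátal closure, Hamiltonian cycle) Let G be a finite simple graph on n vertices and let u and v be two distinct nonadjacent vertices of G with deg(u) + deg(v) ≥ n. Then G has a Hamiltonian cycle if and only if the graph G + uv obtained from G by adding the edge uv has a Hamiltonian cycle. -/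
/-!
A Hamiltonian cycle of `G + uv` that avoids `uv` already lies in `G`; one that uses `uv` yields,
after deleting that edge, a Hamiltonian path of `G` from `u` to `v`. It remains to close such a
path `u = v₀, v₁, …, vₙ₋₁ = v` into a cycle (Ore's rotation). Among its `n - 1` edges `vᵢvᵢ₊₁`,
`deg u` have `u ~ vᵢ₊₁` and `deg v` have `v ~ vᵢ`; as `deg u + deg v ≥ n`, some edge has both
properties, and `u … vᵢ v vₙ₋₂ … vᵢ₊₁ u` is a Hamiltonian cycle of `G`.
-/

open scoped Finset

namespace SimpleGraph.Walk

variable {V : Type*} {G : SimpleGraph V} {u v x y : V}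

lemma edges_subset_edgeSet_of_notMem_sup_edge {p : (G ⊔ edge u v).Walk x y}
    (hp : s(u, v) ∉ p.edges) : ∀ e ∈ p.edges, e ∈ G.edgeSet := by
  intro e he
  have he' := p.edges_subset_edgeSet he
  rw [edgeSet_sup] at he'
  rcases he' with hG | huv
  · exact hG
  · obtain rfl : e = s(u, v) := edgeSet_edge_subset huv
    exact absurd he hp

variable [DecidableEq V]

lemma IsHamiltonian.reverse {p : G.Walk u v} (hp : p.IsHamiltonian) : p.reverse.IsHamiltonian :=
  fun w ↦ by simpa [support_reverse] using hp w

lemma IsHamiltonian.transfer {p : G.Walk u v} (hp : p.IsHamiltonian) {H : SimpleGraph V}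
    (hH : ∀ e ∈ p.edges, e ∈ H.edgeSet) : (p.transfer H hH).IsHamiltonian := by
  simpa [IsHamiltonian, support_transfer] using hp

lemma IsHamiltonianCycle.transfer {c : G.Walk u u} (hc : c.IsHamiltonianCycle) {H : SimpleGraph V}
    (hH : ∀ e ∈ c.edges, e ∈ H.edgeSet) : (c.transfer H hH).IsHamiltonianCycle := by
  rw [isHamiltonianCycle_iff_isCycle_and_support_count_tail_eq_one, support_transfer] at *
  exact ⟨hc.1.transfer hH, hc.2⟩

lemma IsHamiltonian.isHamiltonianCycle_cons {p : G.Walk u v} (hp : p.IsHamiltonian)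
    (h : G.Adj v u) (hlen : p.length ≠ 1) : (cons h p).IsHamiltonianCycle := by
  rw [isHamiltonianCycle_iff_isCycle_and_support_count_tail_eq_one, cons_isCycle_iff,
    Sym2.eq_swap]
  exact ⟨⟨hp.isPath, mt hp.isPath.length_eq_one_of_mem_edges hlen⟩, fun w ↦ by simpa using hp w⟩

lemma IsHamiltonianCycle.exists_isHamiltonian_of_isSubwalk {c : G.Walk u u}
    (hc : c.IsHamiltonianCycle) (h : G.Adj x y) (hs : h.toWalk.IsSubwalk c) :
    ∃ p : G.Walk y x, p.IsHamiltonian ∧ s(x, y) ∉ p.edges := by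
  obtain ⟨q, r, rfl⟩ := hs
  refine ⟨r.append q, fun w ↦ ?_, ?_⟩
  · have hcount := hc.isHamiltonian_tail w
    rw [support_tail_of_not_nil _ hc.not_nil, support_append, support_append,
      Adj.support_toWalk, List.append_assoc, List.tail_append_of_ne_nil q.support_ne_nil] at hcount
    rw [support_append, ← r.cons_tail_support]
    simp only [List.tail_cons, List.singleton_append, List.count_append,
      List.count_cons] at hcount ⊢
    omega
  · have hnodup := hc.edges_nodup
    rw [edges_append, edges_append, Adj.edges_toWalk, List.append_assoc, List.singleton_append,
      List.nodup_middle, List.nodup_cons] at hnodup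
    rw [edges_append, List.perm_append_comm.mem_iff]
    exact hnodup.1

lemma IsHamiltonianCycle.exists_isHamiltonian_of_mem_edges {c : G.Walk u u}
    (hc : c.IsHamiltonianCycle) (he : s(x, y) ∈ c.edges) :
    ∃ p : G.Walk x y, p.IsHamiltonian ∧ s(x, y) ∉ p.edges := by
  obtain hs | hs := (isSubwalk_toWalk_iff_mem_edges (c.adj_of_mem_edges he)).mpr he
  · obtain ⟨p, hp, hpe⟩ := hc.exists_isHamiltonian_of_isSubwalk _ hs
    exact ⟨p.reverse, hp.reverse, by simpa using hpe⟩
  · rw [Sym2.eq_swap]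
    exact hc.exists_isHamiltonian_of_isSubwalk _ hs

lemma IsHamiltonian.exists_mem_darts_adj_snd_adj_fst [Fintype V] [DecidableRel G.Adj]
    {p : G.Walk u v} (hp : p.IsHamiltonian)
    (hdeg : Fintype.card V ≤ G.degree u + G.degree v) :
    ∃ d ∈ p.darts, G.Adj u d.snd ∧ G.Adj v d.fst := by
  set S := p.darts.toFinset
  have hS : #S < G.degree u + G.degree v := by
    have hcard : #S ≤ p.darts.length := List.toFinset_card_le _
    have := Fintype.card_pos_iff.mpr ⟨u⟩
    rw [length_darts, hp.length_eq] at hcard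
    omega
  have hA : G.degree u ≤ #(S.filter (G.Adj u ·.snd)) := by
    rw [← card_neighborFinset_eq_degree]
    refine Finset.card_le_card_of_surjOn (·.snd) fun w hw ↦ ?_
    rw [Finset.mem_coe, mem_neighborFinset] at hw
    have hwp : w ∈ p.darts.map (·.snd) := by
      rw [map_snd_darts]
      exact ((p.mem_support_iff).mp (hp.mem_support w)).resolve_left hw.ne'
    obtain ⟨d, hd, rfl⟩ := List.mem_map.mp hwp
    exact ⟨d, by simpa [S, hd] using hw, rfl⟩
  have hB : G.degree v ≤ #(S.filter (G.Adj v ·.fst)) := by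
    rw [← card_neighborFinset_eq_degree]
    refine Finset.card_le_card_of_surjOn (·.fst) fun w hw ↦ ?_
    rw [Finset.mem_coe, mem_neighborFinset] at hw
    have hwp := hp.mem_support w
    rw [← map_fst_darts_append, List.mem_append, List.mem_singleton] at hwp
    obtain ⟨d, hd, rfl⟩ := List.mem_map.mp (hwp.resolve_right hw.ne')
    exact ⟨d, by simpa [S, hd] using hw, rfl⟩
  obtain ⟨d, hd⟩ := Finset.inter_nonempty_of_card_lt_card_add_card
    (Finset.filter_subset (G.Adj u ·.snd) S) (Finset.filter_subset (G.Adj v ·.fst) S) (by omega)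
  simp only [Finset.mem_inter, Finset.mem_filter, S, List.mem_toFinset] at hd
  exact ⟨d, hd.1.1, hd.1.2, hd.2.2⟩

theorem IsHamiltonian.exists_isHamiltonianCycle_of_card_le_degree_add_degree [Fintype V]
    [DecidableRel G.Adj] {p : G.Walk u v} (hp : p.IsHamiltonian) (hadj : ¬G.Adj u v)
    (hdeg : Fintype.card V ≤ G.degree u + G.degree v) :
    ∃ (a : V) (c : G.Walk a a), c.IsHamiltonianCycle := by
  obtain ⟨d, hd, hud, hvd⟩ := hp.exists_mem_darts_adj_snd_adj_fst hdeg
  obtain ⟨q, r, rfl⟩ := (isSubwalk_toWalk_adj_iff_mem_darts _).mpr hd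
  set w : G.Walk u d.snd := (q.append hvd.symm.toWalk).append r.reverse
  have hperm : w.support.Perm ((q.append d.adj.toWalk).append r).support := by
    simp only [w, support_append, Adj.support_toWalk, List.tail_cons, List.append_assoc,
      List.singleton_append, cons_tail_support]
    rw [support_reverse]
    exact (List.reverse_perm _).append_left _
  have hw : w.IsHamiltonian := fun x ↦ hperm.count_eq x ▸ hp x
  refine ⟨_, cons hud.symm w, hw.isHamiltonianCycle_cons hud.symm ?_⟩
  rw [hw.length_eq, ← hp.length_eq]
  exact fun h ↦ hadj (adj_of_length_eq_one h)

end SimpleGraph.Walk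

open SimpleGraph Walk in
theorem stmt_6_general {V : Type*} [Fintype V] [DecidableEq V] (G : SimpleGraph V)
    [DecidableRel G.Adj] (u v : V) (hadj : ¬ G.Adj u v)
    (hdeg : Fintype.card V ≤ G.degree u + G.degree v) :
    (∃ (a : V) (c : G.Walk a a), c.IsHamiltonianCycle) ↔
      (∃ (a : V) (c : (G ⊔ SimpleGraph.edge u v).Walk a a), c.IsHamiltonianCycle) := by
  constructor
  · rintro ⟨a, c, hc⟩
    exact ⟨a, c.map (Hom.ofLE le_sup_left), hc.map Function.bijective_id⟩
  · rintro ⟨a, c, hc⟩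
    by_cases he : s(u, v) ∈ c.edges
    · obtain ⟨p, hp, hpe⟩ := hc.exists_isHamiltonian_of_mem_edges he
      exact (hp.transfer (edges_subset_edgeSet_of_notMem_sup_edge hpe))
        |>.exists_isHamiltonianCycle_of_card_le_degree_add_degree hadj hdeg
    · exact ⟨a, _, hc.transfer (edges_subset_edgeSet_of_notMem_sup_edge he)⟩

/-- (Bondy–Chvátal, Hamiltonian cycle) Let `G` be a finite simple graph on `n` vertices and
let `u, v` be distinct nonadjacent vertices with `deg u + deg v ≥ n`. Then `G` has a
Hamiltonian cycle iff `G + uv` has a Hamiltonian cycle. -/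
theorem stmt_6 {V : Type*} [Fintype V] [DecidableEq V] (G : SimpleGraph V)
    [DecidableRel G.Adj] (u v : V) (huv : u ≠ v) (hadj : ¬ G.Adj u v)
    (hdeg : Fintype.card V ≤ G.degree u + G.degree v) :
    (∃ (a : V) (c : G.Walk a a), c.IsHamiltonianCycle) ↔
      (∃ (a : V) (c : (G ⊔ SimpleGraph.edge u v).Walk a a), c.IsHamiltonianCycle) :=
  stmt_6_general G u v hadj hdeg
end

section
/- There exists a finite connected 3-regular simple graph on 16 vertices that has a spanning tree with exactly 3 leaves but has no spanning tree with fewer than 3 leaves (in particular, it has no Hamiltonian path). -/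
/-!
Take three copies of `K₄` with one edge subdivided and join the three subdivision vertices to a
new central vertex: the result is cubic. Each edge at the centre is the only edge leaving its
copy, so every spanning tree contains all three of them and the centre has degree `3` in it. In a
finite tree, counting degrees (their sum is `2(n - 1)` and every non-leaf has degree at least `2`)
shows that every vertex which is not a leaf has degree at most the number of leaves; hence every
spanning tree has at least three leaves.
-/

open Finset

namespace SimpleGraph

variable {V : Type*}

lemma ncard_neighborSet_eq_degree (G : SimpleGraph V) (v : V) [Fintype (G.neighborSet v)] :
    (G.neighborSet v).ncard = G.degree v := by
  rw [← Nat.card_coe_set_eq, Nat.card_eq_fintype_card, card_neighborSet_eq_degree]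

lemma ncard_setOf_ncard_neighborSet_eq_one [Fintype V] (G : SimpleGraph V) [DecidableRel G.Adj] :
    {v | (G.neighborSet v).ncard = 1}.ncard = #{v | G.degree v = 1} := by
  simp only [ncard_neighborSet_eq_degree]
  rw [Set.ncard_eq_toFinset_card', Set.toFinset_ofPred]

lemma IsTree.degree_le_card_leaves [Fintype V] {G : SimpleGraph V} [DecidableRel G.Adj]
    (hG : G.IsTree) {c : V} (hc : G.degree c ≠ 1) : G.degree c ≤ #{v | G.degree v = 1} := by
  classical
  let f : V → ℕ := fun v => G.degree v + if G.degree v = 1 then 1 else 0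
  have hsum : ∑ v, f v = 2 * (Fintype.card V - 1) + #{v | G.degree v = 1} := by
    have := hG.card_edgeFinset
    rw [sum_add_distrib, sum_degrees_eq_twice_card_edges, ← card_filter]
    omega
  have hrest : ∑ v ∈ univ.erase c, 2 ≤ ∑ v ∈ univ.erase c, f v := by
    refine sum_le_sum fun v hv => ?_
    have := (hG.connected.preconnected v c).degree_pos_left (ne_of_mem_erase hv)
    by_cases h : G.degree v = 1 <;> simp only [f, h, if_true, if_false] <;> omega
  rw [← add_sum_erase _ _ (mem_univ c)] at hsum
  rw [sum_const, card_erase_of_mem (mem_univ c), card_univ, smul_eq_mul] at hrest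
  have hfc : f c = G.degree c := by simp only [f, hc, if_false, add_zero]
  rw [hfc] at hsum
  omega

lemma Preconnected.adj_of_forall_adj_leaving {G : SimpleGraph V} (hG : G.Preconnected)
    {S : Set V} {a b : V} (ha : a ∈ S) (hb : b ∉ S)
    (hS : ∀ x y, G.Adj x y → x ∈ S → y ∉ S → x = a ∧ y = b) : G.Adj a b := by
  obtain ⟨p⟩ := hG a b
  obtain ⟨d, -, hd₁, hd₂⟩ := p.exists_boundary_dart S ha hb
  obtain ⟨rfl, rfl⟩ := hS _ _ d.adj hd₁ hd₂
  exact d.adj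

lemma reachable_of_iterate_eq {G : SimpleGraph V} {p : V → V}
    (hp : ∀ v, p v ≠ v → G.Adj v (p v)) {n : ℕ} {v w : V} (h : p^[n] v = w) :
    G.Reachable v w := by
  induction n generalizing v with
  | zero => exact h ▸ Reachable.refl v
  | succ n ih =>
    have hstep : G.Reachable v (p v) := by
      by_cases hv : p v = v
      · rw [hv]
      · exact (hp v hv).reachable
    exact hstep.trans (ih h)

lemma connected_of_forall_iterate_eq {G : SimpleGraph V} {p : V → V}
    (hp : ∀ v, p v ≠ v → G.Adj v (p v)) {n : ℕ} {r : V} (h : ∀ v, p^[n] v = r) :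
    G.Connected :=
  have : Nonempty V := ⟨r⟩
  Connected.mk fun u v =>
    (reachable_of_iterate_eq hp (h u)).trans (reachable_of_iterate_eq hp (h v)).symm

end SimpleGraph

open SimpleGraph

/-- Block `i < 3` is `{5i, …, 5i + 4}`: `K₄` on `5i, …, 5i + 3` with the edge `s(5i, 5i + 1)`
subdivided by `5i + 4`, which is joined to the centre `15`. -/
def cubicEdges : List (Fin 16 × Fin 16) :=
  [(0, 2), (0, 3), (1, 2), (1, 3), (2, 3), (0, 4), (1, 4), (4, 15),
   (5, 7), (5, 8), (6, 7), (6, 8), (7, 8), (5, 9), (6, 9), (9, 15),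
   (10, 12), (10, 13), (11, 12), (11, 13), (12, 13), (10, 14), (11, 14), (14, 15)]

def cubicGraph : SimpleGraph (Fin 16) := fromRel fun x y => (x, y) ∈ cubicEdges

instance : DecidableRel cubicGraph.Adj := inferInstanceAs (DecidableRel (fromRel _).Adj)

/-- In block `i` the tree runs `15 - (5i + 4) - 5i - (5i + 2) - (5i + 1) - (5i + 3)`. -/
def treeParent : Fin 16 → Fin 16 := ![4, 2, 0, 1, 15, 9, 7, 5, 6, 15, 14, 12, 10, 11, 15, 15]

def threeLeafTree : SimpleGraph (Fin 16) := fromRel fun v w => w = treeParent v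

instance : DecidableRel threeLeafTree.Adj := inferInstanceAs (DecidableRel (fromRel _).Adj)

lemma cubicGraph_degree : ∀ v, cubicGraph.degree v = 3 := by decide

lemma cubicGraph_adj_leaving_block :
    ∀ a, cubicGraph.Adj a 15 → (15 : Fin 16).val / 5 ≠ a.val / 5 ∧
      ∀ x y, cubicGraph.Adj x y → x.val / 5 = a.val / 5 → y.val / 5 ≠ a.val / 5 →
        x = a ∧ y = 15 := by
  decide

lemma threeLeafTree_le : threeLeafTree ≤ cubicGraph := fun {v w} h =>
  (by decide : ∀ v w, threeLeafTree.Adj v w → cubicGraph.Adj v w) v w h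

lemma threeLeafTree_connected : threeLeafTree.Connected :=
  connected_of_forall_iterate_eq (p := treeParent) (n := 5) (r := 15)
    (fun v hv => (fromRel_adj _ _ _).mpr ⟨hv.symm, Or.inl rfl⟩) (by decide)

lemma threeLeafTree_isTree : threeLeafTree.IsTree := by
  refine isTree_iff_connected_and_card.mpr ⟨threeLeafTree_connected, ?_⟩
  rw [Nat.card_eq_fintype_card, ← edgeFinset_card, Nat.card_eq_fintype_card]
  decide

lemma threeLeafTree_card_leaves : #{v | threeLeafTree.degree v = 1} = 3 := by decide

/-- There exists a finite connected `3`-regular simple graph on `16` vertices that has a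
spanning tree with exactly `3` leaves but no spanning tree with fewer than `3` leaves. -/
theorem stmt_8 :
    ∃ G : SimpleGraph (Fin 16), G.Connected ∧ (∀ w : Fin 16, (G.neighborSet w).ncard = 3) ∧
      (∃ T : SimpleGraph (Fin 16), T ≤ G ∧ T.IsTree ∧
        {v : Fin 16 | (T.neighborSet v).ncard = 1}.ncard = 3) ∧
      (∀ T : SimpleGraph (Fin 16), T ≤ G → T.IsTree →
        3 ≤ {v : Fin 16 | (T.neighborSet v).ncard = 1}.ncard) := by
  refine ⟨cubicGraph, threeLeafTree_connected.mono threeLeafTree_le, fun w => ?_,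
    ⟨threeLeafTree, threeLeafTree_le, threeLeafTree_isTree, ?_⟩, fun T hTG hT => ?_⟩
  · rw [ncard_neighborSet_eq_degree, cubicGraph_degree]
  · rw [ncard_setOf_ncard_neighborSet_eq_one, threeLeafTree_card_leaves]
  classical
  have hcentre : cubicGraph.neighborFinset 15 ⊆ T.neighborFinset 15 := fun a ha => by
    rw [mem_neighborFinset] at ha ⊢
    obtain ⟨h15, hcut⟩ := cubicGraph_adj_leaving_block a ha.symm
    exact (hT.connected.preconnected.adj_of_forall_adj_leaving (S := {v | v.val / 5 = a.val / 5})
      rfl h15 fun x y hxy => hcut x y (hTG hxy)).symm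
  have hdeg : 3 ≤ T.degree 15 := by
    simpa only [card_neighborFinset_eq_degree, cubicGraph_degree] using card_le_card hcentre
  rw [ncard_setOf_ncard_neighborSet_eq_one]
  exact hdeg.trans (hT.degree_le_card_leaves (by omega))
end
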